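/- Let summands and hypotheses be as in the main asymptotic law, but define the upper-bracket counting function N'(E) = Σ_{k=1}^∞ #{(l,m) ∈ ℤ² : l ≥ 0, m ≥ 1, π²l²/f(k)² + π²m²/b_k² ≤ E} (Neumann conditions on the artificial vertical boundaries). Then there is a constant C > 0 such that for all E ≥ 1, |N'(E) − ((1/(4π))·V(E)·E − (1/(4π))·L(E)·√E + G(E))| ≤ C·√E, where V(E) = Σ_{k=1}^{n(E)} f(k)·b_k, L(E) = Σ_{k=1}^{n(E)} 2(f(k)+b_k), G(E) = Σ_{k=1}^{n(E)} (1/4)(P_k(√E/π) − (f(k)b_k/π)E), P_k(R) = #{(l,m) ∈ ℤ² : l²/f(k)² + m²/b_k² ≤ R²}, and n(E) = max{k : b_k ≥ π/√E}. -/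

import Mathlib

open Real Filter

/-- The mixed Dirichlet–Neumann counting function of the rectangle with side
lengths `a` and `b` (Neumann on the two vertical sides): the number of integer
pairs `(l, m)` with `l ≥ 0`, `m ≥ 1` and `π²l²/a² + π²m²/b² ≤ E`. -/
noncomputable def mixedCount (a b E : ℝ) : ℕ :=
  Set.ncard {p : ℤ × ℤ | 0 ≤ p.1 ∧ 1 ≤ p.2 ∧
    Real.pi ^ 2 * (p.1 : ℝ) ^ 2 / a ^ 2 + Real.pi ^ 2 * (p.2 : ℝ) ^ 2 / b ^ 2 ≤ E}

/-- `P_k(R)`: the number of integer lattice points `(l, m)` with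
`l²/a² + m²/b² ≤ R²`. -/
noncomputable def fullEllipseCount (a b R : ℝ) : ℕ :=
  Set.ncard {p : ℤ × ℤ |
    (p.1 : ℝ) ^ 2 / a ^ 2 + (p.2 : ℝ) ^ 2 / b ^ 2 ≤ R ^ 2}

/-- The number of rectangles thick enough to support eigenvalues of size at
most `E` (sequences are `0`-indexed; for `b` antitone this is
`max{k : b_k ≥ π/√E}` in `1`-indexed notation). -/
noncomputable def coreIndex (b : ℕ → ℝ) (E : ℝ) : ℕ :=
  Set.ncard {k : ℕ | Real.pi / Real.sqrt E ≤ b k}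

/-! With `R = √E/π`, the mixed count of a rectangle counts the lattice points of the ellipse
`l²/a² + m²/b² ≤ R²` with `l ≥ 0`, `m ≥ 1`, and reflecting in both axes gives
`P = 4 · (mixed count) + 2⌊aR⌋ + 1 - 2⌊bR⌋`. In the expansion the area terms then cancel
exactly, leaving an error of at most `2bR` per rectangle of the core (where `bR ≥ 1`).
Rectangles outside the core have `bR < 1` and carry no mixed eigenvalue, so the total error is
at most `2R ∑ b_k = O(√E)`. -/

theorem intCast_sq_div_sq_le_sq_iff {t R : ℝ} (ht : 0 < t) (hR : 0 ≤ R) (l : ℤ) :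
    (l : ℝ) ^ 2 / t ^ 2 ≤ R ^ 2 ↔ |l| ≤ ⌊t * R⌋ := by
  rw [div_le_iff₀ (by positivity), ← mul_pow, sq_le_sq,
    abs_of_nonneg (by positivity : 0 ≤ R * t), Int.le_floor, Int.cast_abs, mul_comm t]

theorem Set.ncard_eq_ncard_add_two_mul_ncard_of_involutive {α : Type*} {T : Set α}
    (hT : T.Finite) {e : α → α} (he : Function.Involutive e) (heT : ∀ x ∈ T, e x ∈ T)
    {φ : α → ℤ} (hφ : ∀ x, φ (e x) = -φ x) :
    T.ncard = {x ∈ T | φ x = 0}.ncard + 2 * {x ∈ T | 0 < φ x}.ncard := by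
  have hneg : {x ∈ T | φ x < 0} = e '' {x ∈ T | 0 < φ x} := by
    ext x
    constructor
    · rintro ⟨hx, hφx⟩
      exact ⟨e x, ⟨heT x hx, by rw [hφ]; omega⟩, he x⟩
    · rintro ⟨y, ⟨hy, hφy⟩, rfl⟩
      exact ⟨heT y hy, by rw [hφ]; omega⟩
  have hsplit : T = ({x ∈ T | φ x = 0} ∪ {x ∈ T | 0 < φ x}) ∪ {x ∈ T | φ x < 0} := by
    ext x
    have := lt_trichotomy (φ x) 0
    simp only [Set.mem_union, Set.mem_ofPred_eq]
    tauto
  calc T.ncard = (({x ∈ T | φ x = 0} ∪ {x ∈ T | 0 < φ x}) ∪ {x ∈ T | φ x < 0}).ncard :=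
        congrArg _ hsplit
    _ = {x ∈ T | φ x = 0}.ncard + 2 * {x ∈ T | 0 < φ x}.ncard := by
      have hfin : ∀ P : α → Prop, {x ∈ T | P x}.Finite := fun _ => hT.subset fun _ hx => hx.1
      rw [Set.ncard_union_eq _ ((hfin _).union (hfin _)) (hfin _),
        Set.ncard_union_eq _ (hfin _) (hfin _), hneg, Set.ncard_image_of_injective _ he.injective]
      · ring
      · exact Set.disjoint_left.2 fun x hx hy => by linarith [hx.2, hy.2]
      · exact Set.disjoint_left.2 fun x hx hy => by
          obtain ⟨-, h⟩ | ⟨-, h⟩ := hx <;> linarith [hy.2]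

def ellipsePoints (a b R : ℝ) : Set (ℤ × ℤ) :=
  {p | (p.1 : ℝ) ^ 2 / a ^ 2 + (p.2 : ℝ) ^ 2 / b ^ 2 ≤ R ^ 2}

section ellipsePoints

variable {a b R : ℝ}

theorem abs_fst_le_of_mem_ellipsePoints (ha : 0 < a) (hR : 0 ≤ R) {p : ℤ × ℤ}
    (hp : p ∈ ellipsePoints a b R) : |p.1| ≤ ⌊a * R⌋ :=
  (intCast_sq_div_sq_le_sq_iff ha hR p.1).1 <| by
    have : 0 ≤ (p.2 : ℝ) ^ 2 / b ^ 2 := by positivity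
    exact le_of_add_le_of_nonneg_left hp this

theorem abs_snd_le_of_mem_ellipsePoints (hb : 0 < b) (hR : 0 ≤ R) {p : ℤ × ℤ}
    (hp : p ∈ ellipsePoints a b R) : |p.2| ≤ ⌊b * R⌋ :=
  (intCast_sq_div_sq_le_sq_iff hb hR p.2).1 <| by
    have : 0 ≤ (p.1 : ℝ) ^ 2 / a ^ 2 := by positivity
    exact le_of_add_le_of_nonneg_right hp this

theorem ellipsePoints_finite (ha : 0 < a) (hb : 0 < b) (hR : 0 ≤ R) :
    (ellipsePoints a b R).Finite :=
  ((Set.finite_Icc (-⌊a * R⌋) ⌊a * R⌋).prod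
    (Set.finite_Icc (-⌊b * R⌋) ⌊b * R⌋)).subset
    fun _ hp => ⟨abs_le.1 (abs_fst_le_of_mem_ellipsePoints ha hR hp),
      abs_le.1 (abs_snd_le_of_mem_ellipsePoints hb hR hp)⟩

theorem ncard_ellipsePoints_snd_eq_zero (ha : 0 < a) (hR : 0 ≤ R) :
    ({p ∈ ellipsePoints a b R | p.2 = 0}.ncard : ℤ) = 2 * ⌊a * R⌋ + 1 := by
  have hset : {p ∈ ellipsePoints a b R | p.2 = 0} =
      (fun l => (l, 0)) '' Set.Icc (-⌊a * R⌋) ⌊a * R⌋ := by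
    ext p
    constructor
    · rintro ⟨hp, hp2⟩
      exact ⟨p.1, abs_le.1 (abs_fst_le_of_mem_ellipsePoints ha hR hp), Prod.ext rfl hp2.symm⟩
    · rintro ⟨l, hl, rfl⟩
      refine ⟨?_, rfl⟩
      simpa [ellipsePoints] using (intCast_sq_div_sq_le_sq_iff ha hR l).2 (abs_le.2 hl)
  have : 0 ≤ ⌊a * R⌋ := Int.floor_nonneg.2 (by positivity)
  rw [hset, Set.ncard_image_of_injective _ fun _ _ h => (Prod.ext_iff.1 h).1,
    Set.ncard_eq_toFinset_card', Set.toFinset_Icc, Int.card_Icc]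
  omega

theorem ncard_ellipsePoints_fst_eq_zero_snd_pos (hb : 0 < b) (hR : 0 ≤ R) :
    ({p ∈ ellipsePoints a b R | 0 < p.2 ∧ p.1 = 0}.ncard : ℤ) = ⌊b * R⌋ := by
  have hset : {p ∈ ellipsePoints a b R | 0 < p.2 ∧ p.1 = 0} =
      (fun m => (0, m)) '' Set.Icc 1 ⌊b * R⌋ := by
    ext p
    constructor
    · rintro ⟨hp, hp2, hp1⟩
      have := abs_le.1 (abs_snd_le_of_mem_ellipsePoints hb hR hp)
      exact ⟨p.2, ⟨hp2, this.2⟩, Prod.ext hp1.symm rfl⟩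
    · rintro ⟨m, hm, rfl⟩
      refine ⟨?_, hm.1, rfl⟩
      simpa [ellipsePoints] using
        (intCast_sq_div_sq_le_sq_iff hb hR m).2 (abs_le.2 ⟨by linarith [hm.1, hm.2], hm.2⟩)
  have : 0 ≤ ⌊b * R⌋ := Int.floor_nonneg.2 (by positivity)
  rw [hset, Set.ncard_image_of_injective _ fun _ _ h => (Prod.ext_iff.1 h).2,
    Set.ncard_eq_toFinset_card', Set.toFinset_Icc, Int.card_Icc]
  omega

end ellipsePoints

theorem fullEllipseCount_add_two_mul_floor {a b R : ℝ} (ha : 0 < a) (hb : 0 < b) (hR : 0 ≤ R) :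
    (fullEllipseCount a b R : ℤ) + 2 * ⌊b * R⌋ =
      4 * {p ∈ ellipsePoints a b R | 0 ≤ p.1 ∧ 0 < p.2}.ncard + 2 * ⌊a * R⌋ + 1 := by
  set S := ellipsePoints a b R
  set T := {p ∈ S | 0 < p.2}
  have hS : S.Finite := ellipsePoints_finite ha hb hR
  have hT : T.Finite := hS.subset fun _ hp => hp.1
  have hreflect_snd : S.ncard = {p ∈ S | p.2 = 0}.ncard + 2 * T.ncard :=
    Set.ncard_eq_ncard_add_two_mul_ncard_of_involutive hS (e := fun p => (p.1, -p.2))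
      (fun p => by simp) (fun p hp => by simpa [S, ellipsePoints] using hp) (fun p => rfl)
  have hreflect_fst : T.ncard = {p ∈ T | p.1 = 0}.ncard + 2 * {p ∈ T | 0 < p.1}.ncard :=
    Set.ncard_eq_ncard_add_two_mul_ncard_of_involutive hT (e := fun p => (-p.1, p.2))
      (fun p => by simp) (fun p hp => by simpa [T, S, ellipsePoints] using hp) (fun p => rfl)
  have hquadrant : {p ∈ S | 0 ≤ p.1 ∧ 0 < p.2}.ncard =
      {p ∈ T | p.1 = 0}.ncard + {p ∈ T | 0 < p.1}.ncard := by
    rw [← Set.ncard_union_eq (Set.disjoint_left.2 fun p hp hq => by linarith [hp.2, hq.2])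
      (hT.subset fun _ hp => hp.1) (hT.subset fun _ hp => hp.1)]
    congr 1
    ext p
    simp only [T, Set.mem_union, Set.mem_ofPred_eq]
    constructor
    · rintro ⟨hp, hp1, hp2⟩
      rcases hp1.eq_or_lt with h | h
      exacts [Or.inl ⟨⟨hp, hp2⟩, h.symm⟩, Or.inr ⟨⟨hp, hp2⟩, h⟩]
    · rintro (⟨⟨hp, hp2⟩, h⟩ | ⟨⟨hp, hp2⟩, h⟩)
      exacts [⟨hp, h.ge, hp2⟩, ⟨hp, h.le, hp2⟩]
  have haxis : {p ∈ T | p.1 = 0} = {p ∈ S | 0 < p.2 ∧ p.1 = 0} := by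
    ext p
    simp only [T, Set.mem_ofPred_eq, and_assoc]
  have hsnd_axis : ({p ∈ S | p.2 = 0}.ncard : ℤ) = 2 * ⌊a * R⌋ + 1 :=
    ncard_ellipsePoints_snd_eq_zero ha hR
  have hfst_axis : ({p ∈ T | p.1 = 0}.ncard : ℤ) = ⌊b * R⌋ :=
    haxis ▸ ncard_ellipsePoints_fst_eq_zero_snd_pos hb hR
  change (S.ncard : ℤ) + _ = _
  clear_value T S
  omega

section mixedCount

variable {a b E : ℝ}

theorem mixedCount_eq_ncard (hE : 0 ≤ E) :
    mixedCount a b E =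
      {p ∈ ellipsePoints a b (Real.sqrt E / Real.pi) | 0 ≤ p.1 ∧ 0 < p.2}.ncard := by
  have hR : (Real.sqrt E / Real.pi) ^ 2 = E / Real.pi ^ 2 := by
    rw [div_pow, Real.sq_sqrt hE]
  unfold mixedCount
  congr 1
  ext p
  have hscale : Real.pi ^ 2 * (p.1 : ℝ) ^ 2 / a ^ 2 + Real.pi ^ 2 * (p.2 : ℝ) ^ 2 / b ^ 2 =
      ((p.1 : ℝ) ^ 2 / a ^ 2 + (p.2 : ℝ) ^ 2 / b ^ 2) * Real.pi ^ 2 := by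
    ring
  simp only [ellipsePoints, Set.mem_ofPred_eq, hscale, hR, Order.one_le_iff_pos,
    le_div_iff₀ (by positivity : 0 < Real.pi ^ 2)]
  tauto

theorem mixedCount_eq (ha : 0 < a) (hb : 0 < b) (hE : 0 ≤ E) :
    (mixedCount a b E : ℝ) =
      ((fullEllipseCount a b (Real.sqrt E / Real.pi) : ℝ) +
        2 * ⌊b * (Real.sqrt E / Real.pi)⌋ - 2 * ⌊a * (Real.sqrt E / Real.pi)⌋ - 1) / 4 := by
  have key := fullEllipseCount_add_two_mul_floor ha hb
    (by positivity : 0 ≤ Real.sqrt E / Real.pi)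
  rw [← mixedCount_eq_ncard hE] at key
  have key' : ((fullEllipseCount a b (Real.sqrt E / Real.pi) : ℤ) : ℝ) +
      2 * ⌊b * (Real.sqrt E / Real.pi)⌋ =
      4 * (mixedCount a b E : ℝ) + 2 * ⌊a * (Real.sqrt E / Real.pi)⌋ + 1 := by
    exact_mod_cast key
  push_cast at key'
  linarith

theorem mixedCount_eq_zero_of_lt (hb : 0 < b) (hE : 0 < E) (hthin : b < Real.pi / Real.sqrt E) :
    mixedCount a b E = 0 := by
  have hR : 0 ≤ Real.sqrt E / Real.pi := by positivity
  have hfloor : ⌊b * (Real.sqrt E / Real.pi)⌋ < 1 := by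
    rw [Int.floor_lt, Int.cast_one, mul_div_assoc', div_lt_one Real.pi_pos]
    rwa [lt_div_iff₀ (Real.sqrt_pos.2 hE)] at hthin
  have hempty : {p ∈ ellipsePoints a b (Real.sqrt E / Real.pi) | 0 ≤ p.1 ∧ 0 < p.2} = ∅ :=
    Set.eq_empty_of_forall_notMem fun p ⟨hp, _, hp2⟩ => by
      have := abs_le.1 (abs_snd_le_of_mem_ellipsePoints hb hR hp)
      omega
  rw [mixedCount_eq_ncard hE.le, hempty, Set.ncard_empty]

end mixedCount

theorem IsLowerSet.eq_Iio_ncard {s : Set ℕ} (hs : IsLowerSet s) (hfin : s.Finite) :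
    s = Set.Iio s.ncard := by
  obtain h | ⟨n, rfl⟩ := hs.eq_univ_or_Iio
  · exact absurd (h ▸ hfin) Set.infinite_univ
  · rw [← Finset.coe_Iio, Set.ncard_coe_finset, Nat.card_Iio, Finset.coe_Iio]

theorem lt_coreIndex_iff {b : ℕ → ℝ} {E : ℝ} (hmono : Antitone b)
    (hlim : Tendsto b atTop (nhds 0)) (hE : 0 < E) {k : ℕ} :
    k < coreIndex b E ↔ Real.pi / Real.sqrt E ≤ b k := by
  have hlower : IsLowerSet {k | Real.pi / Real.sqrt E ≤ b k} :=
    fun _ _ hji hi => hi.trans (hmono hji)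
  have hfin : {k | Real.pi / Real.sqrt E ≤ b k}.Finite := by
    have hsmall : ∀ᶠ k in cofinite, b k < Real.pi / Real.sqrt E :=
      Nat.cofinite_eq_atTop ▸ hlim.eventually (eventually_lt_nhds (by positivity))
    simpa using Filter.eventually_cofinite.1 hsmall
  exact (Set.ext_iff.1 (hlower.eq_Iio_ncard hfin) k).symm

noncomputable def weylExpansionTerm (a b E : ℝ) : ℝ :=
  1 / (4 * Real.pi) * (a * b) * E - 1 / (4 * Real.pi) * (2 * (a + b)) * Real.sqrt E +
    1 / 4 * ((fullEllipseCount a b (Real.sqrt E / Real.pi) : ℝ) - a * b / Real.pi * E)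

theorem sum_weylExpansionTerm (s : Finset ℕ) (f b : ℕ → ℝ) (E : ℝ) :
    ∑ k ∈ s, weylExpansionTerm (f k) (b k) E =
      1 / (4 * Real.pi) * (∑ k ∈ s, f k * b k) * E -
        1 / (4 * Real.pi) * (∑ k ∈ s, 2 * (f k + b k)) * Real.sqrt E +
        ∑ k ∈ s, 1 / 4 * ((fullEllipseCount (f k) (b k) (Real.sqrt E / Real.pi) : ℝ) -
          f k * b k / Real.pi * E) := by
  simp only [weylExpansionTerm, Finset.mul_sum, Finset.sum_mul, Finset.sum_add_distrib,
    Finset.sum_sub_distrib]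

theorem abs_mixedCount_sub_weylExpansionTerm_le {a b E : ℝ} (ha : 0 < a) (hb : 0 < b)
    (hE : 0 < E) (hcore : Real.pi / Real.sqrt E ≤ b) :
    |(mixedCount a b E : ℝ) - weylExpansionTerm a b E| ≤ 2 * b * Real.sqrt E / Real.pi := by
  set R := Real.sqrt E / Real.pi with hR
  have hsqrt : Real.sqrt E = Real.pi * R := by rw [hR, mul_div_cancel₀ _ Real.pi_ne_zero]
  have hE_eq : E = Real.pi ^ 2 * R ^ 2 := by rw [← mul_pow, ← hsqrt, Real.sq_sqrt hE.le]
  have hbR : 1 ≤ b * R := by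
    rwa [div_le_iff₀ (Real.sqrt_pos.2 hE), hsqrt, ← mul_assoc, mul_comm b, mul_assoc,
      le_mul_iff_one_le_right Real.pi_pos] at hcore
  have hdiff : (mixedCount a b E : ℝ) - weylExpansionTerm a b E =
      (⌊b * R⌋ + b * R) / 2 + (a * R - ⌊a * R⌋) / 2 - 1 / 4 := by
    rw [mixedCount_eq ha hb hE.le, weylExpansionTerm, ← hR, hsqrt, hE_eq]
    field_simp
    ring
  have hfloor_a := Int.sub_one_lt_floor (a * R)
  have hfloor_a' := Int.floor_le (a * R)
  have hfloor_b := Int.floor_le (b * R)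
  have hfloor_b' : (0 : ℝ) ≤ ⌊b * R⌋ := by exact_mod_cast Int.floor_nonneg.2 (by positivity)
  rw [hdiff, abs_le, mul_div_assoc, ← hR]
  constructor <;> linarith

theorem simple_domain_weyl_law_upper_general (f b : ℕ → ℝ) (c : ℝ) (hc : 0 < c)
    (hf : ∀ k, c ≤ f k) (hb : ∀ k, 0 < b k) (hmono : Antitone b)
    (hsum : Summable b) :
    ∃ C > (0 : ℝ), ∀ E : ℝ, 1 ≤ E →
      |(∑' k, (mixedCount (f k) (b k) E : ℝ)) -
        ((1 / (4 * Real.pi)) *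
            (∑ k ∈ Finset.range (coreIndex b E), f k * b k) * E -
          (1 / (4 * Real.pi)) *
            (∑ k ∈ Finset.range (coreIndex b E), 2 * (f k + b k)) *
              Real.sqrt E +
          ∑ k ∈ Finset.range (coreIndex b E),
            (1 / 4) * ((fullEllipseCount (f k) (b k)
                (Real.sqrt E / Real.pi) : ℝ) -
              (f k * b k / Real.pi) * E))| ≤ C * Real.sqrt E := by
  have hsum_pos : 0 < ∑' k, b k := hsum.tsum_pos (fun k => (hb k).le) 0 (hb 0)
  refine ⟨2 * (∑' k, b k) / Real.pi, by positivity, fun E hE => ?_⟩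
  have hE0 : 0 < E := one_pos.trans_le hE
  set n := coreIndex b E
  have hcore : ∀ {k}, k < n ↔ Real.pi / Real.sqrt E ≤ b k :=
    lt_coreIndex_iff hmono hsum.tendsto_atTop_zero hE0
  have htsum : ∑' k, (mixedCount (f k) (b k) E : ℝ) =
      ∑ k ∈ Finset.range n, (mixedCount (f k) (b k) E : ℝ) :=
    tsum_eq_sum fun k hk => by
      rw [mixedCount_eq_zero_of_lt (hb k) hE0
        (not_le.1 fun h => hk (Finset.mem_range.2 (hcore.2 h))), Nat.cast_zero]
  rw [htsum, ← sum_weylExpansionTerm, ← Finset.sum_sub_distrib]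
  calc |∑ k ∈ Finset.range n,
          ((mixedCount (f k) (b k) E : ℝ) - weylExpansionTerm (f k) (b k) E)|
      ≤ ∑ k ∈ Finset.range n, 2 * b k * Real.sqrt E / Real.pi :=
        (Finset.abs_sum_le_sum_abs _ _).trans <| Finset.sum_le_sum fun k hk =>
          abs_mixedCount_sub_weylExpansionTerm_le (hc.trans_le (hf k)) (hb k) hE0
            (hcore.1 (Finset.mem_range.1 hk))
    _ = 2 * (∑ k ∈ Finset.range n, b k) / Real.pi * Real.sqrt E := by
        rw [Finset.mul_sum, Finset.sum_div, Finset.sum_mul]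
        exact Finset.sum_congr rfl fun k _ => by ring
    _ ≤ 2 * (∑' k, b k) / Real.pi * Real.sqrt E := by
        gcongr
        exact hsum.sum_le_tsum _ fun k _ => (hb k).le

/-- Main asymptotic law for simple domains, upper bracket: the summed mixed
Dirichlet–Neumann lattice count (Neumann on the artificial vertical
boundaries) equals `(1/(4π))·V(E)·E − (1/(4π))·L(E)·√E + G(E)` up to an error
`O(√E)`, where `V`, `L`, `G` are the core volume, summed perimeter and summed
area error of the spectral core. -/
theorem simple_domain_weyl_law_upper (f b : ℕ → ℝ) (c : ℝ) (hc : 0 < c)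
    (hf : ∀ k, c ≤ f k) (hb : ∀ k, 0 < b k) (hmono : Antitone b)
    (hlim : Tendsto b atTop (nhds 0)) (hsum : Summable b) :
    ∃ C > (0 : ℝ), ∀ E : ℝ, 1 ≤ E →
      |(∑' k, (mixedCount (f k) (b k) E : ℝ)) -
        ((1 / (4 * Real.pi)) *
            (∑ k ∈ Finset.range (coreIndex b E), f k * b k) * E -
          (1 / (4 * Real.pi)) *
            (∑ k ∈ Finset.range (coreIndex b E), 2 * (f k + b k)) *
              Real.sqrt E +
          ∑ k ∈ Finset.range (coreIndex b E),
            (1 / 4) * ((fullEllipseCount (f k) (b k)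
                (Real.sqrt E / Real.pi) : ℝ) -
              (f k * b k / Real.pi) * E))| ≤ C * Real.sqrt E :=
  simple_domain_weyl_law_upper_general f b c hc hf hb hmono hsum
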